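/- Counting decomposition for disjoint ASP-SAT programs: if the rules and constraints of a program Q decompose into k programs Q₁,…,Q_k over pairwise disjoint variable sets W₁,…,W_k, then an assignment π = π₁ ∪ … ∪ π_k (with πᵢ complete over Wᵢ) is a stable model of Q if and only if each πᵢ is a stable model of Qᵢ. Consequently the number of stable models of Q equals the product of the numbers of stable models of the Qᵢ. -/
import Mathlib


/-- An ASP-SAT program over variables of type `V`: a set of variables, a subset
of founded variables (the rest being standard), rules `a ← body` with founded
head `a` and a body of literals (a literal is a pair of a variable and a
polarity, `true` meaning positive), and constraints given as clauses (sets of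
literals). -/
structure Prog (V : Type*) where
  vars : Set V
  founded : Set V
  rules : Set (V × Set (V × Bool))
  constraints : Set (Set (V × Bool))

namespace Prog

variable {V : Type*}

/-- Negation of a literal. -/
def lneg (l : V × Bool) : V × Bool := (l.1, !l.2)

/-- The variables occurring in an assignment (a set of literals). -/
def avars (θ : Set (V × Bool)) : Set V := {v | (v, true) ∈ θ ∨ (v, false) ∈ θ}

/-- An assignment is consistent if no variable occurs with both polarities. -/
def Consistent (θ : Set (V × Bool)) : Prop :=
  ∀ v : V, ¬ ((v, true) ∈ θ ∧ (v, false) ∈ θ)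

/-- A set `M` satisfies a positive rule `(a, B)` iff `B ⊆ M → a ∈ M`. -/
def SatRules {W : Type*} (R : Set (W × Set W)) (M : Set W) : Prop :=
  ∀ r ∈ R, r.2 ⊆ M → r.1 ∈ M

/-- The least model of a set of positive rules. -/
def Least {W : Type*} (R : Set (W × Set W)) : Set W :=
  {v | ∀ M : Set W, SatRules R M → v ∈ M}

/-- The reduct of the rules of `P` w.r.t. an assignment `θ`: a rule is discarded
if a negatively occurring body variable is true in `θ` or a standard positive
body variable is false in `θ`; the remaining rules keep only their positive
founded body atoms. -/
def reduct (P : Prog V) (θ : Set (V × Bool)) : Set (V × Set V) :=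
  {p | ∃ body, (p.1, body) ∈ P.rules ∧
    (∀ v : V, (v, false) ∈ body → (v, true) ∉ θ) ∧
    (∀ v : V, (v, true) ∈ body → v ∉ P.founded → (v, false) ∉ θ) ∧
    p.2 = {v | v ∈ P.founded ∧ (v, true) ∈ body}}

/-- `θ` is a stable model of `P`: it is consistent, complete on `P.vars`,
satisfies every constraint, and its true founded variables are exactly the
least model of the reduct. -/
def StableModel (P : Prog V) (θ : Set (V × Bool)) : Prop :=
  Consistent θ ∧ (∀ v ∈ P.vars, (v, true) ∈ θ ∨ (v, false) ∈ θ) ∧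
  (∀ cl ∈ P.constraints, ∃ l ∈ cl, l ∈ θ) ∧
  (∀ v ∈ P.founded, ((v, true) ∈ θ ↔ v ∈ Least (P.reduct θ)))

/-- `J₀(θ)`: the negative literals of `θ` together with its positive standard
literals. -/
def J0 (P : Prog V) (θ : Set (V × Bool)) : Set (V × Bool) :=
  {l ∈ θ | l.2 = false ∨ l.1 ∉ P.founded}

/-- The residual of a set of rules w.r.t. a partial assignment `J` (treating a
rule as its clause): a rule is discarded if its head is true in `J` or some
body literal is false in `J`; otherwise the body literals fixed true by `J`
are removed. -/
def residualRules (R : Set (V × Set (V × Bool))) (J : Set (V × Bool)) :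
    Set (V × Set (V × Bool)) :=
  {p | ∃ body, (p.1, body) ∈ R ∧ (p.1, true) ∉ J ∧
    (∀ l ∈ body, lneg l ∉ J) ∧ p.2 = {l ∈ body | l ∉ J}}

/-- The residual of a set of clauses w.r.t. a partial assignment `θ`: satisfied
clauses are discarded and false literals are deleted from the rest. -/
def residualClauses (C : Set (Set (V × Bool))) (θ : Set (V × Bool)) :
    Set (Set (V × Bool)) :=
  {d | ∃ cl ∈ C, (∀ l ∈ cl, l ∉ θ) ∧ d = {l ∈ cl | lneg l ∉ θ}}

/-- The positive founded part of a set of rules: the rules whose body consists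
solely of positive founded literals, as positive rules. -/
def posPart (P : Prog V) (R : Set (V × Set (V × Bool))) : Set (V × Set V) :=
  {p | ∃ body, (p.1, body) ∈ R ∧ (∀ l ∈ body, l.2 = true ∧ l.1 ∈ P.founded) ∧
    p.2 = {v | (v, true) ∈ body}}

/-- The justified assignment `JA(P, θ)`: `J₀(θ)` together with those positive
founded literals of `θ` implied from `J₀(θ)` using the rules of `P`. -/
def JA (P : Prog V) (θ : Set (V × Bool)) : Set (V × Bool) :=
  P.J0 θ ∪ {l | l.2 = true ∧ l.1 ∈ P.founded ∧ l ∈ θ ∧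
    l.1 ∈ Least (P.posPart (residualRules P.rules (P.J0 θ)))}

/-- The variables occurring in a set of rules. -/
def ruleVars (R : Set (V × Set (V × Bool))) : Set V :=
  {v | ∃ p ∈ R, v = p.1 ∨ ∃ b : Bool, (v, b) ∈ p.2}

/-- The variables occurring in a set of clauses. -/
def clauseVars (C : Set (Set (V × Bool))) : Set V :=
  {v | ∃ cl ∈ C, ∃ b : Bool, (v, b) ∈ cl}

/-- The justified residual program `P||θ = (W, S, D)` where, with `J = JA(P,θ)`
and `U = vars(θ) \ vars(J)`, we set `S = R|_J`,
`D = C|_θ ∪ { unit clause u | u ∈ U }` and `W = vars(S) ∪ vars(D)`. -/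
def justRes (P : Prog V) (θ : Set (V × Bool)) : Prog V :=
  let J := P.JA θ
  let U := avars θ \ avars J
  let S := residualRules P.rules J
  let D := residualClauses P.constraints θ ∪ {cl | ∃ u ∈ U, cl = {((u : V), true)}}
  { vars := ruleVars S ∪ clauseVars D
    founded := P.founded ∩ (ruleVars S ∪ clauseVars D)
    rules := S
    constraints := D }

end Prog

open Prog

section Aux

variable {V : Type*}

lemma mem_avars_of_mem {σ : Set (V × Bool)} {l : V × Bool} (h : l ∈ σ) :
    l.1 ∈ avars σ := by
  rcases l with ⟨v, b⟩
  cases b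
  · exact Or.inr h
  · exact Or.inl h

lemma satRules_least {W : Type*} (R : Set (W × Set W)) : SatRules R (Least R) := by
  intro r hr hsub M hM
  exact hM r hr (fun v hvv => hsub hvv M hM)

lemma least_subset {W : Type*} {R : Set (W × Set W)} {M : Set W}
    (hM : SatRules R M) : Least R ⊆ M :=
  fun _ hvv => hvv M hM

lemma least_iUnion {k : ℕ} (Ws : Fin k → Set V)
    (hdisj : ∀ i j, i ≠ j → Disjoint (Ws i) (Ws j))
    (R : Fin k → Set (V × Set V))
    (hvars : ∀ i, ∀ p ∈ R i, p.1 ∈ Ws i ∧ p.2 ⊆ Ws i) :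
    Least (⋃ i, R i) = ⋃ i, Least (R i) := by
  have hLW : ∀ i, Least (R i) ⊆ Ws i :=
    fun i => least_subset (fun r hr _ => (hvars i r hr).1)
  apply Set.Subset.antisymm
  · intro v hv
    apply hv
    intro r hr hsub
    obtain ⟨i, hri⟩ := Set.mem_iUnion.1 hr
    refine Set.mem_iUnion.2 ⟨i, ?_⟩
    apply satRules_least (R i) r hri
    intro u hu
    obtain ⟨j, huj⟩ := Set.mem_iUnion.1 (hsub hu)
    have hij : i = j := by
      by_contra hne
      exact Set.disjoint_left.mp (hdisj i j hne) ((hvars i r hri).2 hu) (hLW j huj)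
    exact hij ▸ huj
  · intro v hv
    obtain ⟨i, hvi⟩ := Set.mem_iUnion.1 hv
    exact fun M hM => hvi M (fun r hr => hM r (Set.mem_iUnion.2 ⟨i, hr⟩))

lemma restrict_iUnion {k : ℕ} (Ws : Fin k → Set V)
    (hdisj : ∀ i j, i ≠ j → Disjoint (Ws i) (Ws j))
    (p : Fin k → Set (V × Bool)) (hp : ∀ i, avars (p i) ⊆ Ws i) (i : Fin k) :
    {l ∈ ⋃ j, p j | l.1 ∈ Ws i} = p i := by
  ext l
  constructor
  · rintro ⟨hl, hli⟩
    obtain ⟨j, hlj⟩ := Set.mem_iUnion.1 hl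
    have hij : i = j := by
      by_contra hne
      exact Set.disjoint_left.mp (hdisj i j hne) hli (hp j (mem_avars_of_mem hlj))
    exact hij ▸ hlj
  · intro hl
    exact ⟨Set.mem_iUnion.2 ⟨i, hl⟩, hp i (mem_avars_of_mem hl)⟩

lemma stable_split {k : ℕ} (Q : Fin k → Prog V)
    (hW : ∀ i, (Q i).vars = ruleVars (Q i).rules ∪ clauseVars (Q i).constraints)
    (hF : ∀ i, (Q i).founded ⊆ (Q i).vars)
    (hdisj : ∀ i j, i ≠ j → Disjoint ((Q i).vars) ((Q j).vars))
    (QQ : Prog V)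
    (hv : QQ.vars = ⋃ i, (Q i).vars)
    (hf : QQ.founded = ⋃ i, (Q i).founded)
    (hr : QQ.rules = ⋃ i, (Q i).rules)
    (hc : QQ.constraints = ⋃ i, (Q i).constraints)
    (σ : Set (V × Bool)) (hσ : avars σ ⊆ QQ.vars) :
    StableModel QQ σ ↔ ∀ i, StableModel (Q i) {l ∈ σ | l.1 ∈ (Q i).vars} := by
  set τ : Fin k → Set (V × Bool) := fun i => {l ∈ σ | l.1 ∈ (Q i).vars} with hτ
  have hτsub : ∀ i, τ i ⊆ σ := fun i l hl => hl.1
  have uniq : ∀ (i j : Fin k) (v : V), v ∈ (Q i).vars → v ∈ (Q j).vars → i = j := by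
    intro i j v hi hj
    by_contra hne
    exact Set.disjoint_left.mp (hdisj i j hne) hi hj
  have F1 : ∀ (i : Fin k) (v : V) (b : Bool), v ∈ (Q i).vars →
      ((v, b) ∈ σ ↔ (v, b) ∈ τ i) :=
    fun i v b hvW => ⟨fun h => ⟨h, hvW⟩, fun h => h.1⟩
  have F2 : ∀ (i : Fin k) (v : V), v ∈ (Q i).vars →
      (v ∈ QQ.founded ↔ v ∈ (Q i).founded) := by
    intro i v hvW
    rw [hf]
    constructor
    · intro h
      obtain ⟨j, hj⟩ := Set.mem_iUnion.1 h
      exact (uniq i j v hvW (hF j hj)) ▸ hj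
    · intro h
      exact Set.mem_iUnion.2 ⟨i, h⟩
  have ruleVarsMem : ∀ (i : Fin k) (a : V) (body : Set (V × Bool)),
      (a, body) ∈ (Q i).rules → a ∈ (Q i).vars ∧ ∀ l ∈ body, l.1 ∈ (Q i).vars := by
    intro i a body hab
    constructor
    · rw [hW i]
      exact Or.inl ⟨(a, body), hab, Or.inl rfl⟩
    · intro l hl
      rw [hW i]
      exact Or.inl ⟨(a, body), hab, Or.inr ⟨l.2, hl⟩⟩
  have clauseVarsMem : ∀ (i : Fin k) (cl : Set (V × Bool)),
      cl ∈ (Q i).constraints → ∀ l ∈ cl, l.1 ∈ (Q i).vars := by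
    intro i cl hcl l hl
    rw [hW i]
    exact Or.inr ⟨cl, hcl, l.2, hl⟩
  have reduct_eq : QQ.reduct σ = ⋃ i, (Q i).reduct (τ i) := by
    ext p
    constructor
    · rintro ⟨body, hb, c1, c2, hp2⟩
      rw [hr] at hb
      obtain ⟨i, hbi⟩ := Set.mem_iUnion.1 hb
      refine Set.mem_iUnion.2 ⟨i, body, hbi, ?_, ?_, ?_⟩
      · exact fun v hv hvt => c1 v hv (hτsub i hvt)
      · intro v hv hvf hvτ
        have hvW : v ∈ (Q i).vars := (ruleVarsMem i p.1 body hbi).2 (v, true) hv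
        exact c2 v hv (fun h => hvf ((F2 i v hvW).1 h)) (hτsub i hvτ)
      · rw [hp2]
        ext v
        simp only [Set.mem_setOf_eq]
        constructor
        · rintro ⟨hvf, hvb⟩
          exact ⟨(F2 i v ((ruleVarsMem i p.1 body hbi).2 (v, true) hvb)).1 hvf, hvb⟩
        · rintro ⟨hvf, hvb⟩
          exact ⟨(F2 i v ((ruleVarsMem i p.1 body hbi).2 (v, true) hvb)).2 hvf, hvb⟩
    · intro hp
      obtain ⟨i, body, hbi, c1, c2, hp2⟩ := Set.mem_iUnion.1 hp
      have hbW : ∀ l ∈ body, l.1 ∈ (Q i).vars := (ruleVarsMem i p.1 body hbi).2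
      refine ⟨body, hr ▸ Set.mem_iUnion.2 ⟨i, hbi⟩, ?_, ?_, ?_⟩
      · intro v hv hvσ
        exact c1 v hv ((F1 i v true (hbW (v, false) hv)).1 hvσ)
      · intro v hv hvf hvσ
        have hvW : v ∈ (Q i).vars := hbW (v, true) hv
        exact c2 v hv (fun h => hvf ((F2 i v hvW).2 h)) ((F1 i v false hvW).1 hvσ)
      · rw [hp2]
        ext v
        simp only [Set.mem_setOf_eq]
        constructor
        · rintro ⟨hvf, hvb⟩
          exact ⟨(F2 i v (hbW (v, true) hvb)).2 hvf, hvb⟩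
        · rintro ⟨hvf, hvb⟩
          exact ⟨(F2 i v (hbW (v, true) hvb)).1 hvf, hvb⟩
  have reduct_vars : ∀ i, ∀ p ∈ (Q i).reduct (τ i),
      p.1 ∈ (Q i).vars ∧ p.2 ⊆ (Q i).vars := by
    rintro i p ⟨body, hbi, _, _, hp2⟩
    refine ⟨(ruleVarsMem i p.1 body hbi).1, ?_⟩
    intro v hv
    rw [hp2] at hv
    exact (ruleVarsMem i p.1 body hbi).2 (v, true) hv.2
  have least_eq : Least (QQ.reduct σ) = ⋃ i, Least ((Q i).reduct (τ i)) := by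
    rw [reduct_eq]
    exact least_iUnion _ hdisj _ reduct_vars
  have least_iff : ∀ (i : Fin k) (v : V), v ∈ (Q i).vars →
      (v ∈ Least (QQ.reduct σ) ↔ v ∈ Least ((Q i).reduct (τ i))) := by
    intro i v hvW
    rw [least_eq]
    constructor
    · intro h
      obtain ⟨j, hj⟩ := Set.mem_iUnion.1 h
      have hvWj : v ∈ (Q j).vars :=
        least_subset (fun r hr _ => (reduct_vars j r hr).1) hj
      exact (uniq i j v hvW hvWj) ▸ hj
    · exact fun h => Set.mem_iUnion.2 ⟨i, h⟩
  constructor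
  · rintro ⟨hcons, hcomp, hsat, hstab⟩ i
    refine ⟨fun v hvv => hcons v ⟨(hτsub i) hvv.1, (hτsub i) hvv.2⟩, ?_, ?_, ?_⟩
    · intro v hvW
      rcases hcomp v (hv ▸ Set.mem_iUnion.2 ⟨i, hvW⟩) with h | h
      · exact Or.inl ((F1 i v true hvW).1 h)
      · exact Or.inr ((F1 i v false hvW).1 h)
    · intro cl hcl
      obtain ⟨l, hl, hlσ⟩ := hsat cl (hc ▸ Set.mem_iUnion.2 ⟨i, hcl⟩)
      exact ⟨l, hl, hlσ, clauseVarsMem i cl hcl l hl⟩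
    · intro v hvf
      have hvW : v ∈ (Q i).vars := hF i hvf
      have := hstab v (hf ▸ Set.mem_iUnion.2 ⟨i, hvf⟩)
      rw [← F1 i v true hvW, ← least_iff i v hvW]
      exact this
  · intro h
    refine ⟨?_, ?_, ?_, ?_⟩
    · intro v hvv
      have hvW : v ∈ QQ.vars := hσ (Or.inl hvv.1)
      obtain ⟨i, hi⟩ := Set.mem_iUnion.1 (hv ▸ hvW)
      exact (h i).1 v ⟨⟨hvv.1, hi⟩, ⟨hvv.2, hi⟩⟩
    · intro v hvW
      obtain ⟨i, hi⟩ := Set.mem_iUnion.1 (hv ▸ hvW)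
      rcases (h i).2.1 v hi with hh | hh
      · exact Or.inl (hτsub i hh)
      · exact Or.inr (hτsub i hh)
    · intro cl hcl
      obtain ⟨i, hi⟩ := Set.mem_iUnion.1 (hc ▸ hcl)
      obtain ⟨l, hl, hlτ⟩ := (h i).2.2.1 cl hi
      exact ⟨l, hl, hτsub i hlτ⟩
    · intro v hvf
      obtain ⟨i, hi⟩ := Set.mem_iUnion.1 (hf ▸ hvf)
      have hvW : v ∈ (Q i).vars := hF i hi
      rw [F1 i v true hvW, least_iff i v hvW]
      exact (h i).2.2.2 v hi

end Aux

/-- Counting decomposition for disjoint ASP-SAT programs: if the rules and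
constraints of `QQ` decompose into `k` programs `Q₁, …, Q_k` over pairwise
disjoint variable sets `W₁, …, W_k` (with `Wᵢ = vars(Sᵢ) ∪ vars(Dᵢ)`), then an
assignment `π = π₁ ∪ … ∪ π_k` (with `πᵢ` complete over `Wᵢ`) is a stable model
of `QQ` iff each `πᵢ` is a stable model of `Qᵢ`; consequently the number of
stable models of `QQ` equals the product of the numbers of stable models of
the `Qᵢ`. -/
theorem disjoint_counting_decomposition {V : Type*} (k : ℕ) (Q : Fin k → Prog V)
    (hW : ∀ i, (Q i).vars = ruleVars (Q i).rules ∪ clauseVars (Q i).constraints)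
    (hF : ∀ i, (Q i).founded ⊆ (Q i).vars)
    (hdisj : ∀ i j, i ≠ j → Disjoint ((Q i).vars) ((Q j).vars))
    (QQ : Prog V)
    (hv : QQ.vars = ⋃ i, (Q i).vars)
    (hf : QQ.founded = ⋃ i, (Q i).founded)
    (hr : QQ.rules = ⋃ i, (Q i).rules)
    (hc : QQ.constraints = ⋃ i, (Q i).constraints)
    (π : Fin k → Set (V × Bool))
    (hπv : ∀ i, avars (π i) ⊆ (Q i).vars)
    (hπcomp : ∀ i, ∀ v ∈ (Q i).vars, (v, true) ∈ π i ∨ (v, false) ∈ π i) :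
    (StableModel QQ (⋃ i, π i) ↔ ∀ i, StableModel (Q i) (π i)) ∧
    Nat.card {σ : Set (V × Bool) // StableModel QQ σ ∧ avars σ ⊆ QQ.vars} =
      ∏ i : Fin k,
        Nat.card {σ : Set (V × Bool) // StableModel (Q i) σ ∧ avars σ ⊆ (Q i).vars} := by
  have key : ∀ σ : Set (V × Bool), avars σ ⊆ QQ.vars →
      (StableModel QQ σ ↔ ∀ i, StableModel (Q i) {l ∈ σ | l.1 ∈ (Q i).vars}) :=
    stable_split Q hW hF hdisj QQ hv hf hr hc
  have avars_iUnion : ∀ (p : Fin k → Set (V × Bool)), (∀ i, avars (p i) ⊆ (Q i).vars) →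
      avars (⋃ i, p i) ⊆ QQ.vars := by
    intro p hp v hvav
    rw [hv]
    rcases hvav with h | h
    · obtain ⟨i, hi⟩ := Set.mem_iUnion.1 h
      exact Set.mem_iUnion.2 ⟨i, hp i (Or.inl hi)⟩
    · obtain ⟨i, hi⟩ := Set.mem_iUnion.1 h
      exact Set.mem_iUnion.2 ⟨i, hp i (Or.inr hi)⟩
  constructor
  · rw [key (⋃ i, π i) (avars_iUnion π hπv)]
    constructor <;> intro h i
    · have := h i
      rwa [restrict_iUnion (fun i => (Q i).vars) hdisj π hπv i] at this
    · rw [restrict_iUnion (fun i => (Q i).vars) hdisj π hπv i]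
      exact h i
  · rw [← Nat.card_pi]
    apply Nat.card_congr
    refine ⟨fun σ i => ⟨{l ∈ σ.1 | l.1 ∈ (Q i).vars}, (key σ.1 σ.2.2).1 σ.2.1 i, ?_⟩,
      fun p => ⟨⋃ i, (p i).1, ?_, avars_iUnion _ (fun i => (p i).2.2)⟩, ?_, ?_⟩
    · rintro v (h | h)
      · exact h.2
      · exact h.2
    · rw [key _ (avars_iUnion _ (fun i => (p i).2.2))]
      intro i
      rw [restrict_iUnion (fun i => (Q i).vars) hdisj _ (fun i => (p i).2.2) i]
      exact (p i).2.1
    · rintro ⟨σ, hs, hav⟩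
      apply Subtype.ext
      simp only
      ext l
      constructor
      · intro hl
        obtain ⟨i, hi⟩ := Set.mem_iUnion.1 hl
        exact hi.1
      · intro hl
        have := hav (mem_avars_of_mem hl)
        rw [hv] at this
        obtain ⟨i, hi⟩ := Set.mem_iUnion.1 this
        exact Set.mem_iUnion.2 ⟨i, hl, hi⟩
    · intro p
      funext i
      apply Subtype.ext
      simp only
      exact restrict_iUnion (fun i => (Q i).vars) hdisj _ (fun i => (p i).2.2) i
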